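/- arXiv:1308.4067 — 3 statements merged into one kernel-verified Lean document; each statement's English description precedes it below -/
import Mathlib

section
/- Let D = (d_1 ≥ ... ≥ d_n) be a nonincreasing positive integer sequence with maximum d, and define the reverse cumulative histogram Σ = (σ_1 ≤ ... ≤ σ_d) by σ_j = #{i : d_i ≥ d - j + 1}. Then for each j with 1 ≤ j ≤ d, the Erdős–Gallai inequality at k = σ_j is equivalent to: Σ_{i=1}^{j}(σ_i − σ_{i−1})(d − i + 1) ≤ σ_j(σ_j − 1) + Σ_{i=j+1}^{d}(σ_i − σ_{i−1}) min(σ_j, d − i + 1), where σ_0 = 0. -/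
/-!
Column `v` of the histogram collects the entries equal to `d - v + 1`; there are
`σ_v - σ_{v-1}` of them. Since `D` is nonincreasing, its first `σ_j` entries are exactly those in
columns `1, …, j` and, all entries being positive, the remaining ones are those in columns
`j + 1, …, d`. Regrouping each of the two sums of the Erdős–Gallai inequality by columns yields
the corresponding sum of the histogram form.
-/

open Finset

namespace Finset

theorem filter_range_eq_range_card {n : ℕ} {p : ℕ → Prop} [DecidablePred p]
    (hp : ∀ i k, i ≤ k → k < n → p k → p i) :
    {i ∈ range n | p i} = range #{i ∈ range n | p i} := by
  set S := {i ∈ range n | p i}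
  have hS : ∀ i k, i ≤ k → k ∈ S → i ∈ S := by
    intro i k hik hk
    rw [mem_filter, mem_range] at hk ⊢
    exact ⟨hik.trans_lt hk.1, hp i k hik hk.1 hk.2⟩
  ext i
  rw [mem_range]
  constructor
  · intro hi
    simpa using card_le_card fun k hk => hS k i (Nat.lt_succ_iff.mp (mem_range.mp hk)) hi
  · intro hi
    by_contra hiS
    have : S ⊆ range i := fun k hk =>
      mem_range.mpr (lt_of_not_ge fun hik => hiS (hS i k hik hk))
    have := card_le_card this
    rw [card_range] at this
    omega

section Histogram

variable {ι : Type*} (s : Finset ι) (g : ι → ℕ)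

theorem card_filter_le_eq_add_card_filter_eq {v : ℕ} (hv : 0 < v) :
    #{i ∈ s | g i ≤ v} = #{i ∈ s | g i ≤ v - 1} + #{i ∈ s | g i = v} := by
  rw [← card_filter_add_card_filter_not (s := {i ∈ s | g i ≤ v}) (fun i => g i ≤ v - 1),
    filter_filter, filter_filter]
  congr 2 <;> exact filter_congr fun i _ => by omega

theorem sum_filter_mem_Ioc_eq_sum_smul {M : Type*} [AddCommMonoid M] {c : ℕ → ℕ} {a b : ℕ}
    (hc : ∀ v ≤ b, c v = #{i ∈ s | g i ≤ v}) (F : ℕ → M) :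
    ∑ i ∈ s with g i ∈ Ioc a b, F (g i) = ∑ v ∈ Ioc a b, (c v - c (v - 1)) • F v := by
  rw [← sum_fiberwise_of_maps_to' (t := Ioc a b) (fun i hi => (mem_filter.mp hi).2)]
  refine sum_congr rfl fun v hv => ?_
  rw [mem_Ioc] at hv
  have hfiber : {i ∈ {i ∈ s | g i ∈ Ioc a b} | g i = v} = {i ∈ s | g i = v} := by
    rw [filter_filter]
    exact filter_congr fun i _ => by rw [mem_Ioc]; omega
  rw [hfiber, sum_const, hc v hv.2, hc (v - 1) (by omega),
    card_filter_le_eq_add_card_filter_eq s g (by omega : 0 < v), Nat.add_sub_cancel_left]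

end Histogram

end Finset

section DegreeSequence

variable {n d : ℕ} {D σ : ℕ → ℕ}

theorem sum_filter_mem_Ioc_eq_sum_histogram {M : Type*} [AddCommMonoid M] {s : Finset ℕ}
    (hσ : ∀ v, σ v = #{i ∈ s | d - v + 1 ≤ D i}) {a b : ℕ} (hb : b ≤ d) (F : ℕ → M) :
    ∑ i ∈ s with d + 1 - D i ∈ Ioc a b, F (D i)
      = ∑ v ∈ Ioc a b, (σ v - σ (v - 1)) • F (d - v + 1) := by
  have hcount : ∀ v ≤ b, σ v = #{i ∈ s | d + 1 - D i ≤ v} := fun v hv => by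
    rw [hσ]; exact congrArg card (filter_congr fun i _ => by omega)
  rw [← sum_filter_mem_Ioc_eq_sum_smul s (fun i => d + 1 - D i) hcount]
  exact sum_congr rfl fun i hi => by
    rw [mem_filter, mem_Ioc] at hi; congr 1; omega

theorem range_eq_filter_mem_Ioc_zero (hanti : ∀ i j, i ≤ j → j < n → D j ≤ D i)
    (hle : ∀ i < n, D i ≤ d) {j : ℕ} (hσj : σ j = #{i ∈ range n | d - j + 1 ≤ D i})
    (hj : j ≤ d) :
    range (σ j) = {i ∈ range n | d + 1 - D i ∈ Ioc 0 j} := by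
  rw [hσj, ← filter_range_eq_range_card fun i k hik hk h => h.trans (hanti i k hik hk)]
  exact filter_congr fun i hi => by have := hle i (mem_range.mp hi); rw [mem_Ioc]; omega

theorem Ico_eq_filter_mem_Ioc (hanti : ∀ i j, i ≤ j → j < n → D j ≤ D i)
    (hle : ∀ i < n, D i ≤ d) (hpos : ∀ i < n, 0 < D i) {j : ℕ}
    (hσj : σ j = #{i ∈ range n | d - j + 1 ≤ D i}) (hj : j ≤ d) :
    Ico (σ j) n = {i ∈ range n | d + 1 - D i ∈ Ioc j d} := by
  ext i
  have hprefix := congrArg (i ∈ ·) (range_eq_filter_mem_Ioc_zero hanti hle hσj hj)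
  simp only [mem_range, mem_filter, mem_Ioc, mem_Ico, eq_iff_iff] at hprefix ⊢
  have := hpos i
  have := hle i
  omega

end DegreeSequence

theorem eg_histogram_form_general (n d : ℕ) (D : ℕ → ℕ)
    (hanti : ∀ i j, i ≤ j → j < n → D j ≤ D i)
    (hpos : ∀ i, i < n → 0 < D i)
    (hmax : D 0 = d)
    (σ : ℕ → ℕ)
    (hσ : ∀ j, σ j = ((Finset.range n).filter (fun i => d - j + 1 ≤ D i)).card) :
    ∀ j, 1 ≤ j → j ≤ d →
      ((∑ i ∈ Finset.range (σ j), D i ≤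
          σ j * (σ j - 1) + ∑ i ∈ Finset.Ico (σ j) n, min (σ j) (D i)) ↔
        (∑ i ∈ Finset.Icc 1 j, (σ i - σ (i - 1)) * (d - i + 1) ≤
          σ j * (σ j - 1) +
            ∑ i ∈ Finset.Icc (j + 1) d, (σ i - σ (i - 1)) * min (σ j) (d - i + 1))) := by
  intro j _ hjd
  have hle : ∀ i < n, D i ≤ d := fun i hi => hmax ▸ hanti 0 i i.zero_le hi
  rw [range_eq_filter_mem_Ioc_zero hanti hle (hσ j) hjd,
    Ico_eq_filter_mem_Ioc hanti hle hpos (hσ j) hjd,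
    sum_filter_mem_Ioc_eq_sum_histogram hσ hjd (fun x => x),
    sum_filter_mem_Ioc_eq_sum_histogram hσ le_rfl (min (σ j)),
    ← Icc_add_one_left_eq_Ioc, ← Icc_add_one_left_eq_Ioc]
  simp only [smul_eq_mul, zero_add]

/-- The Erdős–Gallai inequality at `k = σ_j` is equivalent to its histogram form,
where `σ_j = #{i : d_i ≥ d - j + 1}` is the reverse cumulative histogram of the
nonincreasing positive sequence `D` with maximum `d` (0-indexed: `d_i = D (i-1)`). -/
theorem eg_histogram_form (n d : ℕ) (hn : 0 < n) (D : ℕ → ℕ)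
    (hanti : ∀ i j, i ≤ j → j < n → D j ≤ D i)
    (hpos : ∀ i, i < n → 0 < D i)
    (hmax : D 0 = d)
    (σ : ℕ → ℕ)
    (hσ : ∀ j, σ j = ((Finset.range n).filter (fun i => d - j + 1 ≤ D i)).card) :
    ∀ j, 1 ≤ j → j ≤ d →
      ((∑ i ∈ Finset.range (σ j), D i ≤
          σ j * (σ j - 1) + ∑ i ∈ Finset.Ico (σ j) n, min (σ j) (D i)) ↔
        (∑ i ∈ Finset.Icc 1 j, (σ i - σ (i - 1)) * (d - i + 1) ≤
          σ j * (σ j - 1) +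
            ∑ i ∈ Finset.Icc (j + 1) d, (σ i - σ (i - 1)) * min (σ j) (d - i + 1))) :=
  eg_histogram_form_general n d D hanti hpos hmax σ hσ
end

section
/- Let D be a degree sequence with maximum d, Σ its reverse cumulative histogram, and Φ = (φ_1,...,φ_d) the associated graphicality deficits. If one entry of D of value d − k + 1 is decreased by one (so σ_k decreases by one and all other σ_j are unchanged, with d held fixed), then the new deficits Φ' satisfy φ'_j = φ_j + 1 for every j > k. -/
/-!
Lowering one entry of value `d − k + 1` to `d − k` removes it from exactly one cumulative
count, so `σ` only drops by one at `k`. For `j > k` the index `k` lies in the head sum of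
`φ_j` and nowhere else, and there the changed differences `σ_k − σ_{k−1}` and
`σ_{k+1} − σ_k` carry the adjacent weights `d − k + 1` and `d − k`, so the head sum drops
by exactly one.
-/

open Finset Function

section Decrement

variable {α : Type*} [DecidableEq α] {s : Finset α} {D : α → ℕ} {i₀ : α} {v : ℕ}

theorem filter_le_update_of_ne (hv : D i₀ = v + 1) {t : ℕ} (ht : t ≠ v + 1) :
    s.filter (fun i => t ≤ update D i₀ v i) = s.filter (fun i => t ≤ D i) := by
  refine filter_congr fun i _ => ?_
  rcases eq_or_ne i i₀ with rfl | h
  · rw [update_self, hv]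
    omega
  · rw [update_of_ne h]

theorem card_filter_le_update_add_one (hi₀ : i₀ ∈ s) (hv : D i₀ = v + 1) :
    #(s.filter fun i => v + 1 ≤ update D i₀ v i) + 1 = #(s.filter fun i => v + 1 ≤ D i) := by
  have herase : s.filter (fun i => v + 1 ≤ update D i₀ v i) =
      (s.filter fun i => v + 1 ≤ D i).erase i₀ := by
    ext i
    rcases eq_or_ne i i₀ with rfl | h <;> simp [*]
  rw [herase, card_erase_add_one (mem_filter.2 ⟨hi₀, hv.ge⟩)]

end Decrement

/-- The slack `φ_j` of the Erdős–Gallai inequality at `k = σ_j`, in histogram form. -/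
def egSlack (d : ℕ) (σ : ℕ → ℕ) (j : ℕ) : ℤ :=
  (σ j : ℤ) * ((σ j : ℤ) - 1) +
    (∑ i ∈ Icc (j + 1) d, ((σ i : ℤ) - (σ (i - 1) : ℤ)) * min (σ j : ℤ) ((d : ℤ) - i + 1)) -
    ∑ i ∈ Icc 1 j, ((σ i : ℤ) - (σ (i - 1) : ℤ)) * ((d : ℤ) - i + 1)

theorem sum_Icc_sub_pred_mul_of_eq_off {f g w : ℕ → ℤ} {k j : ℕ} (hk : 1 ≤ k) (hkj : k < j)
    (hg : ∀ i ≤ j, i ≠ k → g i = f i) {c : ℤ} (hgk : g k = f k + c) :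
    ∑ i ∈ Icc 1 j, (g i - g (i - 1)) * w i =
      ∑ i ∈ Icc 1 j, (f i - f (i - 1)) * w i + c * (w k - w (k + 1)) := by
  have hterm : ∀ i ∈ Icc 1 j, (g i - g (i - 1)) * w i = (f i - f (i - 1)) * w i +
      ((if i = k then c * w k else 0) - if i = k + 1 then c * w (k + 1) else 0) := by
    intro i hi
    rw [mem_Icc] at hi
    by_cases hik : i = k
    · subst hik
      rw [hgk, hg _ (by omega) (by omega)]
      simp only [reduceIte, show i ≠ i + 1 by omega]
      ring
    by_cases hik' : i = k + 1
    · subst hik'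
      rw [hg _ hi.2 hik, Nat.add_sub_cancel, hgk]
      simp only [hik, reduceIte]
      ring
    rw [hg _ hi.2 hik, hg _ (by omega) (by omega)]
    simp only [hik, hik', reduceIte]
    ring
  rw [sum_congr rfl hterm, sum_add_distrib, sum_sub_distrib, sum_ite_eq', sum_ite_eq',
    if_pos (by simp; omega), if_pos (by simp; omega)]
  ring

theorem egSlack_of_drop {d k j : ℕ} {σ σ' : ℕ → ℕ} (hk : 1 ≤ k) (hkj : k < j) (hjd : j ≤ d)
    (hσ' : ∀ m ≤ d, m ≠ k → σ' m = σ m) (hσk : σ' k + 1 = σ k) :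
    egSlack d σ' j = egSlack d σ j + 1 := by
  have hj : σ' j = σ j := hσ' j hjd (by omega)
  have htail : ∀ i ∈ Icc (j + 1) d,
      ((σ' i : ℤ) - (σ' (i - 1) : ℤ)) * min (σ' j : ℤ) ((d : ℤ) - i + 1) =
        ((σ i : ℤ) - (σ (i - 1) : ℤ)) * min (σ j : ℤ) ((d : ℤ) - i + 1) := by
    intro i hi
    rw [mem_Icc] at hi
    rw [hj, hσ' i hi.2 (by omega), hσ' (i - 1) (by omega) (by omega)]
  have hhead := sum_Icc_sub_pred_mul_of_eq_off (f := fun i => (σ i : ℤ))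
    (g := fun i => (σ' i : ℤ)) (w := fun i => (d : ℤ) - i + 1) (c := -1) hk hkj
    (fun i hi hik => congrArg _ (hσ' i (by omega) hik)) (by simp [← hσk])
  unfold egSlack
  rw [sum_congr rfl htail, hhead, hj]
  push_cast
  ring

theorem phi_drop_above_general (n d k i₀ : ℕ) (hi₀ : i₀ < n) (hk : 1 ≤ k)
    (D : ℕ → ℕ)
    (hval : D i₀ = d - k + 1)
    (D' : ℕ → ℕ) (hD' : D' = Function.update D i₀ (d - k))
    (σ σ' : ℕ → ℕ)
    (hσ : ∀ j, σ j = ((Finset.range n).filter (fun i => d - j + 1 ≤ D i)).card)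
    (hσ' : ∀ j, σ' j = ((Finset.range n).filter (fun i => d - j + 1 ≤ D' i)).card)
    (φ φ' : ℕ → ℤ)
    (hφ : ∀ j, φ j =
      (σ j : ℤ) * ((σ j : ℤ) - 1) +
        (∑ i ∈ Finset.Icc (j + 1) d,
          ((σ i : ℤ) - (σ (i - 1) : ℤ)) * min ((σ j : ℤ)) ((d : ℤ) - (i : ℤ) + 1)) -
        ∑ i ∈ Finset.Icc 1 j, ((σ i : ℤ) - (σ (i - 1) : ℤ)) * ((d : ℤ) - (i : ℤ) + 1))
    (hφ' : ∀ j, φ' j =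
      (σ' j : ℤ) * ((σ' j : ℤ) - 1) +
        (∑ i ∈ Finset.Icc (j + 1) d,
          ((σ' i : ℤ) - (σ' (i - 1) : ℤ)) * min ((σ' j : ℤ)) ((d : ℤ) - (i : ℤ) + 1)) -
        ∑ i ∈ Finset.Icc 1 j, ((σ' i : ℤ) - (σ' (i - 1) : ℤ)) * ((d : ℤ) - (i : ℤ) + 1)) :
    ∀ j, k < j → j ≤ d → φ' j = φ j + 1 := by
  intro j hkj hjd
  subst hD'
  have hσ_off : ∀ m ≤ d, m ≠ k → σ' m = σ m := fun m hm hmk => by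
    rw [hσ, hσ', filter_le_update_of_ne hval (by omega)]
  have hσ_at : σ' k + 1 = σ k := by
    rw [hσ, hσ']
    exact card_filter_le_update_add_one (mem_range.2 hi₀) hval
  rw [hφ, hφ']
  exact egSlack_of_drop hk hkj hjd hσ_off hσ_at

/-- Lemma 2(a): after decreasing one entry of value `d − k + 1` by one, the
Erdős–Gallai slacks satisfy `φ'_j = φ_j + 1` for every `j > k`. -/
theorem phi_drop_above (n d k i₀ : ℕ) (hi₀ : i₀ < n) (hk : 1 ≤ k) (hkd : k ≤ d)
    (D : ℕ → ℕ)
    (hanti : ∀ i j, i ≤ j → j < n → D j ≤ D i)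
    (hpos : ∀ i, i < n → 0 < D i)
    (hmaxle : ∀ i, i < n → D i ≤ d)
    (hmaxex : ∃ i, i < n ∧ D i = d)
    (hval : D i₀ = d - k + 1)
    (D' : ℕ → ℕ) (hD' : D' = Function.update D i₀ (d - k))
    (σ σ' : ℕ → ℕ)
    (hσ : ∀ j, σ j = ((Finset.range n).filter (fun i => d - j + 1 ≤ D i)).card)
    (hσ' : ∀ j, σ' j = ((Finset.range n).filter (fun i => d - j + 1 ≤ D' i)).card)
    (φ φ' : ℕ → ℤ)
    (hφ : ∀ j, φ j =
      (σ j : ℤ) * ((σ j : ℤ) - 1) +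
        (∑ i ∈ Finset.Icc (j + 1) d,
          ((σ i : ℤ) - (σ (i - 1) : ℤ)) * min ((σ j : ℤ)) ((d : ℤ) - (i : ℤ) + 1)) -
        ∑ i ∈ Finset.Icc 1 j, ((σ i : ℤ) - (σ (i - 1) : ℤ)) * ((d : ℤ) - (i : ℤ) + 1))
    (hφ' : ∀ j, φ' j =
      (σ' j : ℤ) * ((σ' j : ℤ) - 1) +
        (∑ i ∈ Finset.Icc (j + 1) d,
          ((σ' i : ℤ) - (σ' (i - 1) : ℤ)) * min ((σ' j : ℤ)) ((d : ℤ) - (i : ℤ) + 1)) -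
        ∑ i ∈ Finset.Icc 1 j, ((σ' i : ℤ) - (σ' (i - 1) : ℤ)) * ((d : ℤ) - (i : ℤ) + 1)) :
    ∀ j, k < j → j ≤ d → φ' j = φ j + 1 :=
  phi_drop_above_general n d k i₀ hi₀ hk D hval D' hD' σ σ' hσ hσ' φ φ' hφ hφ'
end

section
/- Let R be a positive random variable (or finite positive-valued function on a finite probability space) with E[R^t] normalized so that R^t / E[R^t] has mean 1 for each t. Then for 0 < t_1 < t_2, Var(R^{t_2}/E[R^{t_2}]) ≥ Var(R^{t_1}/E[R^{t_1}]); i.e., the normalized variance of the power family R^t is nondecreasing in t > 0. Equivalently, E[R^{2t}]/E[R^t]^2 is nondecreasing in t for t > 0. -/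
/-!
Hölder's inequality makes `t ↦ log E[R^t]` convex. For a convex `f` and `0 < s < t`, the points
`2s` and `t` lie in `[s, 2t]`, and the chord inequality on that interval gives
`f(2s) + 2 f(t) ≤ 2 f(s) + f(2t)`, i.e. `f(2t) - 2 f(t)` is nondecreasing. With
`f = log E[R^·]` this is the monotonicity of `E[R^{2t}] / E[R^t]²`, and the variance of
`R^t / E[R^t]` is that ratio minus one.
-/

open Finset Real

variable {ι : Type*}

theorem sum_mul_rpow_convexComb_le (s : Finset ι) {w R : ι → ℝ} (hw : ∀ i, 0 ≤ w i)
    (hR : ∀ i, 0 < R i) (a b : ℝ) {θ : ℝ} (hθ₀ : 0 < θ) (hθ₁ : θ ≤ 1) :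
    ∑ i ∈ s, w i * R i ^ (θ * a + (1 - θ) * b) ≤
      (∑ i ∈ s, w i * R i ^ a) ^ θ * (∑ i ∈ s, w i * R i ^ b) ^ (1 - θ) := by
  -- weighted Hölder with exponent `θ⁻¹`, weights `w R^b` and function `R^((a-b)θ)`
  have holder := inner_le_weight_mul_Lp_of_nonneg s (one_le_inv₀ hθ₀ |>.2 hθ₁)
    (fun i => w i * R i ^ b) (fun i => R i ^ ((a - b) * θ))
    (fun i => mul_nonneg (hw i) (rpow_pos_of_pos (hR i) b).le)
    (fun i => (rpow_pos_of_pos (hR i) _).le)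
  have hcomb : ∀ i, w i * R i ^ b * R i ^ ((a - b) * θ) = w i * R i ^ (θ * a + (1 - θ) * b) :=
    fun i => by rw [mul_assoc, ← rpow_add (hR i)]; ring_nf
  have hpow : ∀ i, w i * R i ^ b * (R i ^ ((a - b) * θ)) ^ θ⁻¹ = w i * R i ^ a := fun i => by
    rw [← rpow_mul (hR i).le, mul_inv_cancel_right₀ hθ₀.ne', mul_assoc, ← rpow_add (hR i)]
    ring_nf
  simp only [hcomb, hpow, inv_inv] at holder
  exact holder.trans_eq (mul_comm _ _)

theorem convexOn_log_sum_mul_rpow [Fintype ι] [Nonempty ι] {w R : ι → ℝ}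
    (hw : ∀ i, 0 < w i) (hR : ∀ i, 0 < R i) :
    ConvexOn ℝ Set.univ fun t : ℝ => log (∑ i, w i * R i ^ t) := by
  have hpos : ∀ t : ℝ, 0 < ∑ i, w i * R i ^ t := fun t =>
    sum_pos (fun i _ => mul_pos (hw i) (rpow_pos_of_pos (hR i) t)) univ_nonempty
  refine convexOn_iff_forall_pos.2 ⟨convex_univ, fun x _ y _ θ η hθ hη hsum => ?_⟩
  obtain rfl : η = 1 - θ := by linarith
  calc log (∑ i, w i * R i ^ (θ • x + (1 - θ) • y))
      ≤ log ((∑ i, w i * R i ^ x) ^ θ * (∑ i, w i * R i ^ y) ^ (1 - θ)) :=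
        log_le_log (hpos _)
          (sum_mul_rpow_convexComb_le _ (fun i => (hw i).le) hR x y hθ (by linarith))
    _ = θ • log (∑ i, w i * R i ^ x) + (1 - θ) • log (∑ i, w i * R i ^ y) := by
        rw [log_mul (rpow_pos_of_pos (hpos x) _).ne' (rpow_pos_of_pos (hpos y) _).ne',
          log_rpow (hpos x), log_rpow (hpos y), smul_eq_mul, smul_eq_mul]

theorem ConvexOn.monotoneOn_sub_two_mul {f : ℝ → ℝ} (hf : ConvexOn ℝ (Set.Ioi 0) f) :
    MonotoneOn (fun t => f (2 * t) - 2 * f t) (Set.Ioi 0) := by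
  intro s (hs : 0 < s) t (ht : 0 < t) hst
  obtain rfl | hst := hst.eq_or_lt
  · rfl
  have h2t : 2 * t ∈ Set.Ioi 0 := by simp only [Set.mem_Ioi]; linarith
  have hchord₁ :=
    hf.secant_mono_aux1 hs h2t (by linarith : s < 2 * s) (by linarith : 2 * s < 2 * t)
  have hchord₂ := hf.secant_mono_aux1 hs h2t hst (by linarith : t < 2 * t)
  have hD : 0 < 2 * t - s := by linarith
  show f (2 * s) - 2 * f s ≤ f (2 * t) - 2 * f t
  nlinarith

theorem sum_mul_div_sum_sub_one_sq {s : Finset ι} {w X : ι → ℝ} (hw : ∑ i ∈ s, w i = 1)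
    (hm : ∑ i ∈ s, w i * X i ≠ 0) :
    ∑ i ∈ s, w i * (X i / ∑ j ∈ s, w j * X j - 1) ^ 2 =
      (∑ i ∈ s, w i * X i ^ 2) / (∑ i ∈ s, w i * X i) ^ 2 - 1 := by
  set m := ∑ i ∈ s, w i * X i
  have hterm : ∀ i, w i * (X i / m - 1) ^ 2 = w i * X i ^ 2 / m ^ 2 - 2 * (w i * X i) / m + w i :=
    fun i => by field_simp; ring
  simp only [hterm, sum_add_distrib, sum_sub_distrib, ← sum_div, ← mul_sum, hw]
  field_simp
  ring

/-- For a positive random variable `R` on a finite probability space, the variance of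
the mean-one normalization `R^t / E[R^t]` is nondecreasing in `t > 0`: for
`0 < t₁ < t₂`, `Var(R^{t₁}/E[R^{t₁}]) ≤ Var(R^{t₂}/E[R^{t₂}])`; equivalently
`E[R^{2t}]/E[R^t]²` is nondecreasing in `t > 0`. -/
theorem power_family_variance_monotone (n : ℕ) (hn : 0 < n)
    (w R : Fin n → ℝ) (hw : ∀ i, 0 < w i) (hw1 : ∑ i, w i = 1)
    (hR : ∀ i, 0 < R i) :
    (∀ t₁ t₂ : ℝ, 0 < t₁ → t₁ < t₂ →
      (∑ i, w i * (R i ^ t₁ / (∑ j, w j * R j ^ t₁) - 1) ^ 2) ≤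
        ∑ i, w i * (R i ^ t₂ / (∑ j, w j * R j ^ t₂) - 1) ^ 2) ∧
    (∀ t₁ t₂ : ℝ, 0 < t₁ → t₁ < t₂ →
      (∑ i, w i * R i ^ (2 * t₁)) / (∑ i, w i * R i ^ t₁) ^ 2 ≤
        (∑ i, w i * R i ^ (2 * t₂)) / (∑ i, w i * R i ^ t₂) ^ 2) := by
  have : Nonempty (Fin n) := ⟨⟨0, hn⟩⟩
  have hM : ∀ t : ℝ, 0 < ∑ i, w i * R i ^ t := fun t =>
    sum_pos (fun i _ => mul_pos (hw i) (rpow_pos_of_pos (hR i) t)) univ_nonempty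
  have hratio : ∀ t₁ t₂ : ℝ, 0 < t₁ → t₁ < t₂ →
      (∑ i, w i * R i ^ (2 * t₁)) / (∑ i, w i * R i ^ t₁) ^ 2 ≤
        (∑ i, w i * R i ^ (2 * t₂)) / (∑ i, w i * R i ^ t₂) ^ 2 := by
    intro t₁ t₂ h₁ h₁₂
    have hlog := ((convexOn_log_sum_mul_rpow hw hR).subset (Set.subset_univ _)
      (convex_Ioi 0)).monotoneOn_sub_two_mul h₁ (h₁.trans h₁₂) h₁₂.le
    rw [← log_le_log_iff (div_pos (hM _) (pow_pos (hM _) 2)) (div_pos (hM _) (pow_pos (hM _) 2)),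
      log_div (hM _).ne' (pow_pos (hM _) 2).ne', log_div (hM _).ne' (pow_pos (hM _) 2).ne',
      log_pow, log_pow]
    exact_mod_cast hlog
  have hvar : ∀ t : ℝ, ∑ i, w i * (R i ^ t / (∑ j, w j * R j ^ t) - 1) ^ 2 =
      (∑ i, w i * R i ^ (2 * t)) / (∑ i, w i * R i ^ t) ^ 2 - 1 := fun t => by
    have hsq : ∀ i, R i ^ (2 * t) = (R i ^ t) ^ 2 := fun i => by
      rw [mul_comm]; exact_mod_cast rpow_mul_natCast (hR i).le t 2
    simp only [hsq, sum_mul_div_sum_sub_one_sq hw1 (hM t).ne']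
  refine ⟨fun t₁ t₂ h₁ h₁₂ => ?_, hratio⟩
  rw [hvar, hvar]
  linarith [hratio t₁ t₂ h₁ h₁₂]
end
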